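/- Let G be a group and N a normal subgroup of G such that the quotient group G/N is infinite cyclic. Let π₁, π₂ be irreducible finite-dimensional complex representations of G. Then Hom_N(π₁, π₂) ≠ 0 if and only if there exists a group homomorphism ω : G → ℂ* which is trivial on N such that π₂ is isomorphic to the twist π₁ ⊗ ω (i.e., the representation g ↦ ω(g)·π₁(g)). -/

import Mathlib

/-!
Conjugation `f ↦ ρ₂ g ∘ f ∘ ρ₁ g⁻¹` makes `Hom_N(π₁, π₂)`, the `N`-invariants of `linHom ρ₁ ρ₂`,
a finite-dimensional representation of the cyclic group `G/N`. An eigenvector `f` of a generator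
`q` is then an eigenvector of all of `G/N`: its eigenvalue `μ` satisfies `μ ^ orderOf q = 1`, so
`q ↦ μ` extends to a character `χ` of `G/N`, and `f` is invariant under the twist by `χ⁻¹`.
Pulled back to `G`, the eigenvector equation says that `f` intertwines `π₁ ⊗ ω` with `π₂`, where
`ω` is `χ` composed with `G → G/N`; by Schur's lemma the nonzero `f` is an isomorphism.
-/

variable {G : Type*} [Group G]

/-- A finite-dimensional complex representation is irreducible if it is nonzero and has no
invariant subspace other than `⊥` and `⊤`. -/
def IsIrrep {V : Type*} [AddCommGroup V] [Module ℂ V] (ρ : Representation ℂ G V) : Prop :=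
  Nontrivial V ∧ ∀ p : Submodule ℂ V, (∀ g : G, ∀ v ∈ p, ρ g v ∈ p) → p = ⊥ ∨ p = ⊤

/-- The space of linear maps intertwining the restrictions to a subgroup `H`. -/
def homSpace (H : Subgroup G) {V₁ V₂ : Type*} [AddCommGroup V₁] [Module ℂ V₁]
    [AddCommGroup V₂] [Module ℂ V₂] (ρ₁ : Representation ℂ G V₁)
    (ρ₂ : Representation ℂ G V₂) : Submodule ℂ (V₁ →ₗ[ℂ] V₂) where
  carrier := {f | ∀ h ∈ H, ∀ v, f (ρ₁ h v) = ρ₂ h (f v)}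
  add_mem' := by
    intro f g hf hg h hh v
    simp [hf h hh v, hg h hh v]
  zero_mem' := by intro h hh v; simp
  smul_mem' := by
    intro c f hf h hh v
    simp [hf h hh v]

open Representation

namespace Representation

section Twist

variable {k M V : Type*} [CommSemiring k] [Monoid M] [AddCommMonoid V] [Module k V]

def twist (ρ : Representation k M V) (ω : M →* kˣ) : Representation k M V where
  toFun g := (ω g : k) • ρ g
  map_one' := by simp
  map_mul' g h := by rw [map_mul, map_mul, Units.val_mul, smul_mul_smul_comm]

@[simp]
lemma twist_apply (ρ : Representation k M V) (ω : M →* kˣ) (g : M) :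
    ρ.twist ω g = (ω g : k) • ρ g :=
  rfl

end Twist

lemma isIntertwiningMap_twist_of_linHom_eq_smul {k V W : Type*} [CommRing k] [AddCommGroup V]
    [Module k V] [AddCommGroup W] [Module k W] {ρ : Representation k G V}
    {σ : Representation k G W} {ω : G →* kˣ} {f : V →ₗ[k] W}
    (hf : ∀ g, linHom ρ σ g f = (ω g : k) • f) : (ρ.twist ω).IsIntertwiningMap σ f := by
  refine ⟨fun g v => ?_⟩
  have := LinearMap.congr_fun (hf g) (ρ g v)
  simp only [linHom_apply, LinearMap.comp_apply, LinearMap.smul_apply] at this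
  rw [← Module.End.mul_apply, ← map_mul, inv_mul_cancel, map_one, Module.End.one_apply] at this
  simp [this]

theorem exists_character_eigenvector_of_isCyclic {K C W : Type*} [Field K] [IsAlgClosed K]
    [Group C] [IsCyclic C] [AddCommGroup W] [Module K W] [FiniteDimensional K W] [Nontrivial W]
    (Φ : Representation K C W) : ∃ χ : C →* Kˣ, ∃ w ≠ 0, ∀ c, Φ c w = (χ c : K) • w := by
  obtain ⟨q, hq⟩ := IsCyclic.exists_generator (α := C)
  obtain ⟨μ, hμ⟩ := Module.End.exists_eigenvalue (Φ q)
  obtain ⟨w, hw⟩ := hμ.exists_hasEigenvector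
  have hμ0 : μ ≠ 0 := by
    rintro rfl
    apply hw.2
    simpa using congrArg (Φ q⁻¹) hw.apply_eq_smul
  have hμ_pow : μ ^ orderOf q = 1 :=
    smul_left_injective K hw.2 <| by
      simpa [← map_pow, pow_orderOf_eq_one] using (hw.pow_apply (orderOf q)).symm
  set χ := monoidHomOfForallMemZpowers hq (g' := Units.mk0 μ hμ0)
    (orderOf_dvd_of_pow_eq_one (Units.ext hμ_pow))
  have hw_inv : w ∈ (Φ.twist χ⁻¹).invariants :=
    (mem_invariants_iff_of_forall_mem_zpowers _ q hq w).2 <| by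
      simp [χ, hw.apply_eq_smul, smul_smul, hμ0]
  exact ⟨χ, w, hw.2, fun c => (inv_smul_eq_iff₀ (χ c).ne_zero).1 (by simpa using hw_inv c)⟩

end Representation

section Irrep

variable {V V₁ V₂ : Type*} [AddCommGroup V] [Module ℂ V] [AddCommGroup V₁] [Module ℂ V₁]
  [AddCommGroup V₂] [Module ℂ V₂]

lemma IsIrrep.isIrreducible {ρ : Representation ℂ G V} (h : IsIrrep ρ) : ρ.IsIrreducible where
  exists_pair_ne :=
    have := h.1
    ⟨⊥, ⊤, fun hbt => bot_ne_top (congrArg Subrepresentation.toSubmodule hbt)⟩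
  eq_bot_or_eq_top σ := (h.2 σ.toSubmodule σ.apply_mem_toSubmodule).imp
    Subrepresentation.ext Subrepresentation.ext

lemma IsIrrep.twist {ρ : Representation ℂ G V} (h : IsIrrep ρ) (ω : G →* ℂˣ) :
    IsIrrep (ρ.twist ω) := by
  refine ⟨h.1, fun p hp => h.2 p fun g v hv => ?_⟩
  simpa using p.smul_mem ((ω g)⁻¹ : ℂˣ) (hp g v hv)

lemma IsIrrep.bijective_of_isIntertwiningMap {ρ₁ : Representation ℂ G V₁}
    {ρ₂ : Representation ℂ G V₂} (h₁ : IsIrrep ρ₁) (h₂ : IsIrrep ρ₂) {f : V₁ →ₗ[ℂ] V₂}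
    (hf : ρ₁.IsIntertwiningMap ρ₂ f) (hf0 : f ≠ 0) : Function.Bijective f := by
  have := h₁.isIrreducible
  have := h₂.isIrreducible
  exact (IsIrreducible.bijective_or_eq_zero
    (f.intertwiningMap_of_isIntertwiningMap ρ₁ ρ₂ hf.isIntertwining)).resolve_right
    fun h => hf0 (congrArg IntertwiningMap.toLinearMap h)

lemma homSpace_eq_invariants (H : Subgroup G) (ρ₁ : Representation ℂ G V₁)
    (ρ₂ : Representation ℂ G V₂) :
    homSpace H ρ₁ ρ₂ = invariants ((linHom ρ₁ ρ₂).comp H.subtype) := by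
  ext f
  exact Subtype.forall.symm.trans <| (isIntertwiningMap_iff _ _ f).symm.trans
    (mem_linHom_invariants_iff_isIntertwining (ρ := ρ₁.comp H.subtype)
      (σ := ρ₂.comp H.subtype) f).symm

lemma mem_homSpace_of_isIntertwiningMap_twist {H : Subgroup G} {ρ₁ : Representation ℂ G V₁}
    {ρ₂ : Representation ℂ G V₂} {ω : G →* ℂˣ} (hω : ∀ h ∈ H, ω h = 1) {f : V₁ →ₗ[ℂ] V₂}
    (hf : (ρ₁.twist ω).IsIntertwiningMap ρ₂ f) : f ∈ homSpace H ρ₁ ρ₂ := fun h hh v => by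
  simpa [hω h hh] using hf.isIntertwining h v

end Irrep

theorem stmt8_general {V₁ V₂ : Type*} [AddCommGroup V₁] [Module ℂ V₁] [FiniteDimensional ℂ V₁]
    [AddCommGroup V₂] [Module ℂ V₂] [FiniteDimensional ℂ V₂]
    (N : Subgroup G) [N.Normal] [IsCyclic (G ⧸ N)]
    (ρ₁ : Representation ℂ G V₁) (ρ₂ : Representation ℂ G V₂)
    (h₁ : IsIrrep ρ₁) (h₂ : IsIrrep ρ₂) :
    homSpace N ρ₁ ρ₂ ≠ ⊥ ↔
      ∃ ω : G →* ℂˣ, (∀ n ∈ N, ω n = 1) ∧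
        ∃ e : V₁ ≃ₗ[ℂ] V₂, ∀ g : G, ∀ v : V₁,
          e ((ω g : ℂ) • ρ₁ g v) = ρ₂ g (e v) := by
  constructor
  · intro hne
    have : Nontrivial (invariants ((linHom ρ₁ ρ₂).comp N.subtype)) := by
      rw [← homSpace_eq_invariants]
      exact Submodule.nontrivial_iff_ne_bot.2 hne
    obtain ⟨χ, f, hf0, hf⟩ :=
      exists_character_eigenvector_of_isCyclic ((linHom ρ₁ ρ₂).quotientToInvariants N)
    set ω := χ.comp (QuotientGroup.mk' N)
    have hfω : (ρ₁.twist ω).IsIntertwiningMap ρ₂ f :=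
      isIntertwiningMap_twist_of_linHom_eq_smul fun g => congrArg Subtype.val (hf g)
    have hbij := (h₁.twist ω).bijective_of_isIntertwiningMap h₂ hfω (by simpa using hf0)
    exact ⟨ω, fun n hn => by simp [ω, (QuotientGroup.eq_one_iff n).2 hn],
      LinearEquiv.ofBijective _ hbij, hfω.isIntertwining⟩
  · rintro ⟨ω, hω, e, he⟩
    have := h₁.1
    exact (Submodule.ne_bot_iff _).2 ⟨e, mem_homSpace_of_isIntertwiningMap_twist hω ⟨he⟩,
      LinearMap.ne_zero_of_injective e.injective⟩

/-- if `G/N` is infinite cyclic then `Hom_N(π₁, π₂) ≠ 0` iff `π₂` is a twist of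
`π₁` by a character of `G` trivial on `N`. -/
theorem stmt8 {V₁ V₂ : Type*} [AddCommGroup V₁] [Module ℂ V₁] [FiniteDimensional ℂ V₁]
    [AddCommGroup V₂] [Module ℂ V₂] [FiniteDimensional ℂ V₂]
    (N : Subgroup G) [N.Normal] [IsCyclic (G ⧸ N)] [Infinite (G ⧸ N)]
    (ρ₁ : Representation ℂ G V₁) (ρ₂ : Representation ℂ G V₂)
    (h₁ : IsIrrep ρ₁) (h₂ : IsIrrep ρ₂) :
    homSpace N ρ₁ ρ₂ ≠ ⊥ ↔
      ∃ ω : G →* ℂˣ, (∀ n ∈ N, ω n = 1) ∧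
        ∃ e : V₁ ≃ₗ[ℂ] V₂, ∀ g : G, ∀ v : V₁,
          e ((ω g : ℂ) • ρ₁ g v) = ρ₂ g (e v) :=
  stmt8_general N ρ₁ ρ₂ h₁ h₂
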